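/- Let M ∈ ℕ, Δ ∈ ℂ, and k₁,…,k_M ∈ ℂ with G(a,b) := 1 + exp(i(k_a + k_b)) − 2Δ·exp(i k_a) nonzero for all a ≠ b in {1,…,M}, and define the amplitude A_M(P) := ε(P) · ∏_{1≤j<ℓ≤M} G(Pj, Pℓ)/G(j, ℓ). Let c be the cyclic permutation of {1,…,M} with c(m) = m+1 for m < M and c(M) = 1. Then for every permutation Q of {1,…,M}: A_M(Q) · ∏_{m=2}^{M} G(Qm, Q1) = (−1)^{M−1} · A_M(Q∘c) · ∏_{m=2}^{M} G(Q1, Qm); equivalently, A_M(Q)/A_M(Q∘c) = (−1)^{M−1} ∏_{m=2}^{M} (1 + exp(i(k_{Q1}+k_{Qm})) − 2Δ·exp(i k_{Q1}))/(1 + exp(i(k_{Q1}+k_{Qm})) − 2Δ·exp(i k_{Qm})), which yields the Bethe ansatz equations from the boundary conditions (Appendix E.C, eq. (E.34)). -/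

import Mathlib

/-!
The rotation `c` keeps every ordered pair `j < ℓ` ordered except the pairs `(j, M)`, which go to
the reversed pairs `(j + 1, 1)`. Hence the numerator of `A_M(Q ∘ c)` is that of `A_M(Q)` with the
factors `G(Qm, Q1)` replaced by `G(Q1, Qm)`, while `ε(c) = (-1)^(M-1)`.
-/

open Finset

/-- `G(a,b) := 1 + exp(i(k_a + k_b)) − 2Δ·exp(i k_a)`. -/
noncomputable def Gfac (M : ℕ) (Δ : ℂ) (k : Fin M → ℂ) (a b : Fin M) : ℂ :=
  1 + Complex.exp (Complex.I * (k a + k b)) - 2 * Δ * Complex.exp (Complex.I * k a)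

/-- The coordinate Bethe ansatz amplitude (E.18):
`A_M(P) = ε(P) · ∏_{j<ℓ} G(Pj, Pℓ)/G(j, ℓ)`. -/
noncomputable def ampXXZ (M : ℕ) (Δ : ℂ) (k : Fin M → ℂ) (P : Equiv.Perm (Fin M)) : ℂ :=
  (Equiv.Perm.sign P : ℤ) *
    ∏ jl ∈ univ.filter (fun jl : Fin M × Fin M => jl.1 < jl.2),
      Gfac M Δ k (P jl.1) (P jl.2) / Gfac M Δ k jl.1 jl.2

section LtPairsProd

variable {α : Type*} [CommMonoid α] {m n : ℕ}

def ltPairsProd (F : Fin m → Fin m → α) : α :=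
  ∏ jl ∈ univ.filter (fun jl : Fin m × Fin m => jl.1 < jl.2), F jl.1 jl.2

lemma ltPairsProd_eq_prod_prod_ite (F : Fin m → Fin m → α) :
    ltPairsProd F = ∏ j, ∏ l, if j < l then F j l else 1 := by
  rw [ltPairsProd, prod_filter, ← univ_product_univ, prod_product]

lemma ltPairsProd_succ (F : Fin (n + 1) → Fin (n + 1) → α) :
    ltPairsProd F = (∏ l : Fin n, F 0 l.succ) * ltPairsProd (fun a b => F a.succ b.succ) := by
  simp [ltPairsProd_eq_prod_prod_ite, Fin.prod_univ_succ, Fin.succ_pos]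

lemma ltPairsProd_castSucc (F : Fin (n + 1) → Fin (n + 1) → α) :
    ltPairsProd F =
      ltPairsProd (fun a b => F a.castSucc b.castSucc) *
        ∏ j : Fin n, F j.castSucc (Fin.last n) := by
  simp [ltPairsProd_eq_prod_prod_ite, Fin.prod_univ_castSucc, prod_mul_distrib,
    (Fin.castSucc_lt_last _).not_gt]

lemma ltPairsProd_finRotate (F : Fin (n + 1) → Fin (n + 1) → α) :
    ltPairsProd (fun a b => F (finRotate (n + 1) a) (finRotate (n + 1) b)) =
      ltPairsProd (fun a b => F a.succ b.succ) * ∏ j : Fin n, F j.succ 0 := by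
  simp [ltPairsProd_castSucc (n := n)]

lemma ltPairsProd_finRotate_mul (F : Fin (n + 1) → Fin (n + 1) → α) :
    ltPairsProd (fun a b => F (finRotate (n + 1) a) (finRotate (n + 1) b)) *
        ∏ l : Fin n, F 0 l.succ =
      ltPairsProd F * ∏ j : Fin n, F j.succ 0 := by
  rw [ltPairsProd_finRotate, ltPairsProd_succ F]
  ac_rfl

end LtPairsProd

lemma prod_filter_ne_zero_eq_prod_succ {β : Type*} [CommMonoid β] {n : ℕ} (f : Fin (n + 1) → β) :
    ∏ m ∈ univ.filter (fun m : Fin (n + 1) => m ≠ 0), f m = ∏ m : Fin n, f m.succ := by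
  simp [prod_filter, Fin.prod_univ_succ]

lemma ampXXZ_eq_sign_mul_div (M : ℕ) (Δ : ℂ) (k : Fin M → ℂ) (P : Equiv.Perm (Fin M)) :
    ampXXZ M Δ k P = Equiv.Perm.sign P *
      (ltPairsProd (fun a b => Gfac M Δ k (P a) (P b)) / ltPairsProd (Gfac M Δ k)) := by
  rw [ampXXZ, ltPairsProd, ltPairsProd, prod_div_distrib]

/-- Appendix E.C, eq. (E.34): with `c` the cyclic permutation `m ↦ m+1` (`M ↦ 1`),
for every permutation `Q`,
`A_M(Q) · ∏_{m=2}^{M} G(Qm, Q1) = (−1)^{M−1} · A_M(Q∘c) · ∏_{m=2}^{M} G(Q1, Qm)`,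
which yields the Bethe ansatz equations from the boundary conditions. -/
theorem eq_E_34 (M : ℕ) (hM : 0 < M) (Δ : ℂ) (k : Fin M → ℂ)
    (hG : ∀ a b : Fin M, a ≠ b → Gfac M Δ k a b ≠ 0)
    (Q : Equiv.Perm (Fin M)) :
    ampXXZ M Δ k Q *
        ∏ m ∈ univ.filter (fun m : Fin M => m ≠ ⟨0, hM⟩), Gfac M Δ k (Q m) (Q ⟨0, hM⟩)
      = (-1 : ℂ) ^ (M - 1) * ampXXZ M Δ k (Q * finRotate M) *
          ∏ m ∈ univ.filter (fun m : Fin M => m ≠ ⟨0, hM⟩), Gfac M Δ k (Q ⟨0, hM⟩) (Q m) := by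
  obtain ⟨n, rfl⟩ : ∃ n, M = n + 1 := ⟨M - 1, (Nat.succ_pred_eq_of_pos hM).symm⟩
  have hD : ltPairsProd (Gfac (n + 1) Δ k) ≠ 0 :=
    prod_ne_zero_iff.mpr fun jl hjl => hG _ _ (mem_filter.mp hjl).2.ne
  have hsign : (-1 : ℂ) ^ n * (Equiv.Perm.sign (Q * finRotate (n + 1)) : ℤ) =
      (Equiv.Perm.sign Q : ℤ) := by
    rw [map_mul, sign_finRotate]
    push_cast
    rw [mul_left_comm, ← mul_pow, neg_one_mul, neg_neg, one_pow, mul_one]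
  have hcycle := ltPairsProd_finRotate_mul (fun a b => Gfac (n + 1) Δ k (Q a) (Q b))
  rw [Fin.zero_eta, prod_filter_ne_zero_eq_prod_succ, prod_filter_ne_zero_eq_prod_succ,
    Nat.add_sub_cancel, ampXXZ_eq_sign_mul_div, ampXXZ_eq_sign_mul_div, ← mul_assoc _ (_ : ℂ),
    hsign]
  simp only [Equiv.Perm.mul_apply] at hcycle ⊢
  field_simp
  linear_combination -hcycle
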